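/- arXiv:2412.09434 — 3 statements merged into one kernel-verified Lean document; each statement's English description precedes it below -/
import Mathlib

section
/- Let G be a finite simple graph and X a vector field on G, regarded as the first order differential operator Xφ(i) = Σ_{darts u with π(u)=i} X(u)(φ(π₊(u)) − φ(π(u))) on C(G). Then the adjoint X* of X with respect to the inner product on C(G) is given by X*ψ = X̄ψ + (div X)·ψ, i.e. X*ψ(i) = Σ_{darts u with π(u)=i} X(ū)(ψ(π₊(u)) − ψ(π(u))) + ψ(i)·div X(i) for all ψ ∈ C(G) and i ∈ V_G. -/
open SimpleGraph Finset

variable {V : Type*} [Fintype V] [DecidableEq V]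

/-- The gradient of a function `φ : V → ℝ`: the vector field `(∇φ)(u) = φ(π₊(u)) − φ(π(u))`. -/
def grad (G : SimpleGraph V) (φ : V → ℝ) : G.Dart → ℝ := fun u => φ u.snd - φ u.fst

/-- The divergence of a vector field: `(div X)(i) = Σ_{darts u with π(u)=i} (X(ū) − X(u))`. -/
def divergence (G : SimpleGraph V) [DecidableRel G.Adj] (X : G.Dart → ℝ) : V → ℝ :=
  fun i => ∑ u ∈ Finset.univ.filter (fun u : G.Dart => u.fst = i), (X u.symm - X u)
/-- A vector field `X` regarded as a first order differential operator:
`Xφ(i) = Σ_{darts u with π(u)=i} X(u)(φ(π₊(u)) − φ(π(u)))`. -/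
def fieldOp (G : SimpleGraph V) [DecidableRel G.Adj] (X : G.Dart → ℝ) (φ : V → ℝ) : V → ℝ :=
  fun i => ∑ u ∈ Finset.univ.filter (fun u : G.Dart => u.fst = i), X u * (φ u.snd - φ u.fst)

/-
Both sides are sums over darts. Moving `Xφ` to darts gives `Σ_u ψ(π u) X(u) (φ(π₊ u) − φ(π u))`;
the part involving `φ(π₊ u)` becomes, after reindexing by the reversal `u ↦ ū`, the term
`Σ_u φ(π u) X(ū) ψ(π₊ u)` of `⟨φ, X̄ψ⟩`, and what is left over is exactly `⟨φ, (div X)·ψ⟩`.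
-/

namespace SimpleGraph

variable (G : SimpleGraph V) [DecidableRel G.Adj]

theorem sum_mul_sum_filter_dart_fst {R : Type*} [NonUnitalNonAssocSemiring R]
    (g : V → R) (f : G.Dart → R) :
    ∑ i : V, g i * ∑ u ∈ univ.filter (fun u : G.Dart => u.fst = i), f u =
      ∑ u : G.Dart, g u.fst * f u := by
  rw [← sum_fiberwise univ (fun u : G.Dart => u.fst)]
  refine sum_congr rfl fun i _ => ?_
  rw [mul_sum]
  exact sum_congr rfl fun u hu => by rw [(mem_filter.mp hu).2]

theorem sum_mul_fieldOp (X : G.Dart → ℝ) (g φ : V → ℝ) :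
    ∑ i : V, g i * fieldOp G X φ i = ∑ u : G.Dart, g u.fst * (X u * (φ u.snd - φ u.fst)) :=
  sum_mul_sum_filter_dart_fst G g _

theorem sum_mul_divergence (X : G.Dart → ℝ) (g : V → ℝ) :
    ∑ i : V, g i * divergence G X i = ∑ u : G.Dart, g u.fst * (X u.symm - X u) :=
  sum_mul_sum_filter_dart_fst G g _

end SimpleGraph

/-- The adjoint of the first order differential operator `X` is given by
`X*ψ = X̄ψ + (div X)·ψ`: for all `φ, ψ`, `⟨Xφ, ψ⟩ = ⟨φ, X̄ψ + (div X)·ψ⟩`. -/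
theorem fieldOp_adjoint (G : SimpleGraph V) [DecidableRel G.Adj] (X : G.Dart → ℝ) :
    ∀ φ ψ : V → ℝ,
      ∑ i : V, fieldOp G X φ i * ψ i =
        ∑ i : V, φ i * (fieldOp G (fun u => X u.symm) ψ i + ψ i * divergence G X i) := by
  intro φ ψ
  have reverse : ∑ u : G.Dart, ψ u.fst * (X u * φ u.snd) =
      ∑ u : G.Dart, φ u.fst * (X u.symm * ψ u.snd) := by
    refine Fintype.sum_bijective _ Dart.symm_involutive.bijective _ _ fun u => ?_
    rw [Dart.symm_symm]
    show _ = φ u.snd * (X u * ψ u.fst)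
    ring
  calc ∑ i : V, fieldOp G X φ i * ψ i
      = ∑ u : G.Dart, ψ u.fst * (X u * (φ u.snd - φ u.fst)) := by
        simp only [mul_comm (fieldOp G X φ _), G.sum_mul_fieldOp]
    _ = ∑ u : G.Dart, ψ u.fst * (X u * φ u.snd) - ∑ u : G.Dart, φ u.fst * ψ u.fst * X u := by
        rw [← sum_sub_distrib]
        exact sum_congr rfl fun u _ => by ring
    _ = ∑ u : G.Dart, φ u.fst * (X u.symm * ψ u.snd) -
          ∑ u : G.Dart, φ u.fst * ψ u.fst * X u := by rw [reverse]
    _ = ∑ i : V, φ i * (fieldOp G (fun u => X u.symm) ψ i + ψ i * divergence G X i) := by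
        simp only [mul_add, sum_add_distrib, ← mul_assoc, G.sum_mul_fieldOp,
          G.sum_mul_divergence (g := fun i => φ i * ψ i)]
        rw [← sum_add_distrib, ← sum_sub_distrib]
        exact sum_congr rfl fun u _ => by ring
end

section
/- (Green's Third Identity) Let G be a finite connected simple graph, S ⊆ V_G a subset of vertices, i ∈ V_G, and φ ∈ C(G). Let G_i be the Green's function with pole at i, i.e. the unique function in C̊(G) with ΔG_i = e_i − 1/|V_G|. Then Σ_{j∈S} G_i(j)·Δφ(j) = φ(i)·1_S(i) − (1/|V_G|)·Σ_{j∈S} φ(j) + Σ_{boundary darts u} n_S(u)·[G_i(π(u))·(φ(π₊(u)) − φ(π(u))) − φ(π(u))·(G_i(π₊(u)) − G_i(π(u)))], where the last sum is over all darts u with exactly one endpoint in S, n_S(u) = +1 if π(u) ∉ S and n_S(u) = −1 if π(u) ∈ S, and 1_S is the indicator function of S. -/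
open SimpleGraph Finset

variable {V : Type*} [Fintype V] [DecidableEq V]

/-- The Laplacian `Δ = div ∘ ∇`. -/
def lap (G : SimpleGraph V) [DecidableRel G.Adj] (φ : V → ℝ) : V → ℝ :=
  divergence G (grad G φ)

/-!
Summation by parts turns `Σ_{j∈S} (Gi Δφ − φ ΔGi)(j)` into a sum over the darts leaving `S` of
the antisymmetric dart function `Gi(π)·∇φ − φ(π)·∇Gi`; reversal of darts cancels the darts
inside `S` and matches outgoing with incoming boundary darts (Green's second identity).
Substituting `ΔGi = e_i − 1/|V|` gives the third identity.
-/

theorem grad_symm {W : Type*} {G : SimpleGraph W} (φ : W → ℝ) (u : G.Dart) :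
    grad G φ u.symm = -grad G φ u := by
  simp only [grad, Dart.symm_toProd, Prod.fst_swap, Prod.snd_swap, neg_sub]

theorem sum_dart_symm {W M : Type*} [AddCommMonoid M] {G : SimpleGraph W} [Fintype G.Dart]
    (f : G.Dart → M) : ∑ u : G.Dart, f u.symm = ∑ u : G.Dart, f u :=
  Equiv.sum_comp (Dart.symm_involutive.toPerm _) f

section
variable {G : SimpleGraph V} [DecidableRel G.Adj]

theorem sum_mul_lap (S : Finset V) (χ ψ : V → ℝ) :
    ∑ j ∈ S, χ j * lap G ψ j =
      -2 * ∑ u ∈ univ.filter (fun u : G.Dart => u.fst ∈ S), χ u.fst * grad G ψ u := by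
  rw [mul_sum, ← sum_fiberwise_eq_sum_filter univ S fun u : G.Dart => u.fst]
  refine sum_congr rfl fun j _ => ?_
  simp only [lap, divergence, grad_symm, mul_sum]
  refine sum_congr rfl fun u hu => ?_
  rw [(mem_filter.mp hu).2]
  ring

theorem sum_boundary_normal_mul_of_antisymm (S : Finset V) (D : G.Dart → ℝ)
    (hD : ∀ u, D u.symm = -D u) :
    ∑ u ∈ univ.filter (fun u : G.Dart => Xor (u.fst ∈ S) (u.snd ∈ S)),
        (if u.fst ∈ S then (-1 : ℝ) else 1) * D u =
      -2 * ∑ u ∈ univ.filter (fun u : G.Dart => u.fst ∈ S), D u := by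
  have hincoming : ∑ u ∈ univ.filter (fun u : G.Dart => u.snd ∈ S), D u =
      -∑ u ∈ univ.filter (fun u : G.Dart => u.fst ∈ S), D u := by
    rw [sum_filter, sum_filter, ← sum_dart_symm, ← sum_neg_distrib]
    refine sum_congr rfl fun u _ => ?_
    simp only [Dart.symm_toProd, Prod.snd_swap, hD]
    split_ifs <;> simp
  -- darts inside `S` contribute to both sums below and cancel in the difference
  have hboundary : ∑ u ∈ univ.filter (fun u : G.Dart => Xor (u.fst ∈ S) (u.snd ∈ S)),
        (if u.fst ∈ S then (-1 : ℝ) else 1) * D u =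
      ∑ u ∈ univ.filter (fun u : G.Dart => u.snd ∈ S), D u -
        ∑ u ∈ univ.filter (fun u : G.Dart => u.fst ∈ S), D u := by
    simp only [sum_filter, ← sum_sub_distrib]
    refine sum_congr rfl fun u _ => ?_
    by_cases h₁ : u.fst ∈ S <;> by_cases h₂ : u.snd ∈ S <;> simp [h₁, h₂]
  rw [hboundary, hincoming]
  ring

theorem greens_second_identity (S : Finset V) (χ ψ : V → ℝ) :
    ∑ j ∈ S, (χ j * lap G ψ j - ψ j * lap G χ j) =
      ∑ u ∈ univ.filter (fun u : G.Dart => Xor (u.fst ∈ S) (u.snd ∈ S)),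
        (if u.fst ∈ S then (-1 : ℝ) else 1) *
          (χ u.fst * (ψ u.snd - ψ u.fst) - ψ u.fst * (χ u.snd - χ u.fst)) := by
  rw [sum_boundary_normal_mul_of_antisymm S _ fun u => by
      simp only [Dart.symm_toProd, Prod.fst_swap, Prod.snd_swap]; ring,
    sum_sub_distrib, sum_mul_lap, sum_mul_lap, ← mul_sub, ← sum_sub_distrib]
  rfl

end

theorem greens_third_identity_general (G : SimpleGraph V) [DecidableRel G.Adj]
    (S : Finset V) (i : V) (φ : V → ℝ) (Gi : V → ℝ)
    (hGi : ∀ j : V, lap G Gi j = (if j = i then (1 : ℝ) else 0) - 1 / (Fintype.card V)) :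
    ∑ j ∈ S, Gi j * lap G φ j =
      φ i * (if i ∈ S then (1 : ℝ) else 0) - (1 / (Fintype.card V)) * ∑ j ∈ S, φ j +
      ∑ u ∈ Finset.univ.filter (fun u : G.Dart => Xor (u.fst ∈ S) (u.snd ∈ S)),
        (if u.fst ∈ S then (-1 : ℝ) else 1) *
          (Gi u.fst * (φ u.snd - φ u.fst) - φ u.fst * (Gi u.snd - Gi u.fst)) := by
  have hpole : ∑ j ∈ S, φ j * lap G Gi j =
      φ i * (if i ∈ S then (1 : ℝ) else 0) - (1 / (Fintype.card V)) * ∑ j ∈ S, φ j := by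
    simp only [hGi, mul_sub, mul_ite, mul_one, mul_zero, sum_sub_distrib, sum_ite_eq',
      ← sum_mul]
    split_ifs <;> ring
  rw [← greens_second_identity, sum_sub_distrib, hpole]
  ring

/-- (Green's Third Identity) Let `Gi` be the Green's function with pole at `i`: the unique
function in `C̊(G)` with `ΔGi = e_i − 1/|V|`. Then
`Σ_{j∈S} Gi(j)·Δφ(j) = φ(i)·1_S(i) − (1/|V|)·Σ_{j∈S} φ(j)
  + Σ_{boundary darts u} n_S(u)·[Gi(π(u))·(φ(π₊(u)) − φ(π(u))) − φ(π(u))·(Gi(π₊(u)) − Gi(π(u)))]`. -/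
theorem greens_third_identity (G : SimpleGraph V) [DecidableRel G.Adj]
    (hconn : G.Connected) (S : Finset V) (i : V) (φ : V → ℝ) (Gi : V → ℝ)
    (hGi0 : ∑ j : V, Gi j = 0)
    (hGi : ∀ j : V, lap G Gi j = (if j = i then (1 : ℝ) else 0) - 1 / (Fintype.card V)) :
    ∑ j ∈ S, Gi j * lap G φ j =
      φ i * (if i ∈ S then (1 : ℝ) else 0) - (1 / (Fintype.card V)) * ∑ j ∈ S, φ j +
      ∑ u ∈ Finset.univ.filter (fun u : G.Dart => Xor (u.fst ∈ S) (u.snd ∈ S)),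
        (if u.fst ∈ S then (-1 : ℝ) else 1) *
          (Gi u.fst * (φ u.snd - φ u.fst) - φ u.fst * (Gi u.snd - Gi u.fst)) :=
  greens_third_identity_general G S i φ Gi hGi
end

section
/- Let A, B, C be finite-dimensional real inner product spaces and f: A → B, g: B → C linear maps with g ∘ f = 0. Then B = im(f) ⊕ im(g*) ⊕ ker(f f* + g* g) is an orthogonal direct sum decomposition, ker(f f* + g* g) = ker(f*) ∩ ker(g), and dim ker(g) − dim im(f) = dim ker(f f* + g* g), where f* and g* denote the adjoints of f and g. -/
open Module

/-!
Write `Δ = f f* + g* g`. Since `⟪Δ x, x⟫ = ‖f* x‖² + ‖g x‖²`, the kernel of `Δ` is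
`ker f* ∩ ker g = (im f)ᗮ ∩ (im g*)ᗮ = (im f + im g*)ᗮ`, which gives the decomposition once
`im f ⟂ im g*`; this holds because `im f ≤ ker g = (im g*)ᗮ`. Inside `ker g`, the space
`ker Δ = (im f)ᗮ ∩ ker g` is the orthogonal complement of `im f`, whence the dimension count.
-/

namespace LinearMap

variable {𝕜 E F G : Type*} [RCLike 𝕜] [NormedAddCommGroup E] [InnerProductSpace 𝕜 E]
  [NormedAddCommGroup F] [InnerProductSpace 𝕜 F] [FiniteDimensional 𝕜 F]
  [NormedAddCommGroup G] [InnerProductSpace 𝕜 G] [FiniteDimensional 𝕜 G]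

theorem ker_eq_orthogonal_range_adjoint (g : F →ₗ[𝕜] G) : ker g = (range g.adjoint)ᗮ := by
  rw [orthogonal_range, adjoint_adjoint]

theorem isOrtho_range_range_adjoint {f : E →ₗ[𝕜] F} {g : F →ₗ[𝕜] G} (hgf : g ∘ₗ f = 0) :
    range f ⟂ range g.adjoint := by
  rw [Submodule.isOrtho_iff_le, ← ker_eq_orthogonal_range_adjoint]
  exact range_le_ker_iff.mpr hgf

variable [FiniteDimensional 𝕜 E]

noncomputable def hodgeLaplacian (f : E →ₗ[𝕜] F) (g : F →ₗ[𝕜] G) : F →ₗ[𝕜] F :=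
  f ∘ₗ f.adjoint + g.adjoint ∘ₗ g

theorem inner_hodgeLaplacian_self (f : E →ₗ[𝕜] F) (g : F →ₗ[𝕜] G) (x : F) :
    inner 𝕜 (hodgeLaplacian f g x) x = ((‖f.adjoint x‖ ^ 2 + ‖g x‖ ^ 2 : ℝ) : 𝕜) := by
  rw [hodgeLaplacian, add_apply, comp_apply, comp_apply, inner_add_left,
    ← adjoint_inner_right f, adjoint_inner_left g, inner_self_eq_norm_sq_to_K,
    inner_self_eq_norm_sq_to_K]
  push_cast
  rfl

theorem ker_hodgeLaplacian (f : E →ₗ[𝕜] F) (g : F →ₗ[𝕜] G) :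
    ker (hodgeLaplacian f g) = ker f.adjoint ⊓ ker g := by
  ext x
  simp only [mem_ker, Submodule.mem_inf]
  constructor
  · intro hx
    have hsum := inner_hodgeLaplacian_self f g x
    rw [hx, inner_zero_left, eq_comm] at hsum
    norm_cast at hsum
    rw [add_eq_zero_iff_of_nonneg (by positivity) (by positivity)] at hsum
    simpa using hsum
  · rintro ⟨hf, hg⟩
    simp [hodgeLaplacian, hf, hg]

theorem ker_hodgeLaplacian_eq_orthogonal_sup (f : E →ₗ[𝕜] F) (g : F →ₗ[𝕜] G) :
    ker (hodgeLaplacian f g) = (range f ⊔ range g.adjoint)ᗮ := by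
  rw [ker_hodgeLaplacian, ← Submodule.inf_orthogonal, orthogonal_range,
    ← ker_eq_orthogonal_range_adjoint]

theorem finrank_range_add_finrank_ker_hodgeLaplacian {f : E →ₗ[𝕜] F} {g : F →ₗ[𝕜] G}
    (hgf : g ∘ₗ f = 0) :
    finrank 𝕜 (range f) + finrank 𝕜 (ker (hodgeLaplacian f g)) = finrank 𝕜 (ker g) := by
  rw [ker_hodgeLaplacian, ← orthogonal_range]
  exact Submodule.finrank_add_inf_finrank_orthogonal (range_le_ker_iff.mpr hgf)

end LinearMap

/-- Let `A`, `B`, `C` be finite dimensional real inner product spaces and `f : A → B`,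
`g : B → C` linear maps with `g ∘ f = 0`. Then
`B = im(f) ⊕ im(g*) ⊕ ker(f f* + g* g)` is an orthogonal direct sum decomposition,
`ker(f f* + g* g) = ker(f*) ∩ ker(g)`, and
`dim ker(g) − dim im(f) = dim ker(f f* + g* g)`. -/
theorem hodge_decomposition_lemma
    {A B C : Type*}
    [NormedAddCommGroup A] [InnerProductSpace ℝ A] [FiniteDimensional ℝ A]
    [NormedAddCommGroup B] [InnerProductSpace ℝ B] [FiniteDimensional ℝ B]
    [NormedAddCommGroup C] [InnerProductSpace ℝ C] [FiniteDimensional ℝ C]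
    (f : A →ₗ[ℝ] B) (g : B →ₗ[ℝ] C) (hgf : g ∘ₗ f = 0) :
    -- pairwise orthogonality of the three summands
    (∀ x ∈ LinearMap.range f, ∀ y ∈ LinearMap.range (LinearMap.adjoint g),
      inner ℝ x y = (0 : ℝ)) ∧
    (∀ x ∈ LinearMap.range f,
      ∀ z ∈ LinearMap.ker (f ∘ₗ LinearMap.adjoint f + LinearMap.adjoint g ∘ₗ g),
      inner ℝ x z = (0 : ℝ)) ∧
    (∀ y ∈ LinearMap.range (LinearMap.adjoint g),
      ∀ z ∈ LinearMap.ker (f ∘ₗ LinearMap.adjoint f + LinearMap.adjoint g ∘ₗ g),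
      inner ℝ y z = (0 : ℝ)) ∧
    -- the three summands span B
    (LinearMap.range f ⊔ LinearMap.range (LinearMap.adjoint g) ⊔
        LinearMap.ker (f ∘ₗ LinearMap.adjoint f + LinearMap.adjoint g ∘ₗ g) = ⊤) ∧
    -- ker(f f* + g* g) = ker(f*) ∩ ker(g)
    (LinearMap.ker (f ∘ₗ LinearMap.adjoint f + LinearMap.adjoint g ∘ₗ g) =
      LinearMap.ker (LinearMap.adjoint f) ⊓ LinearMap.ker g) ∧
    -- dim ker(g) − dim im(f) = dim ker(f f* + g* g)
    ((finrank ℝ (LinearMap.ker g) : ℤ) - finrank ℝ (LinearMap.range f) =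
      finrank ℝ (LinearMap.ker (f ∘ₗ LinearMap.adjoint f + LinearMap.adjoint g ∘ₗ g))) := by
  have hker := LinearMap.ker_hodgeLaplacian_eq_orthogonal_sup f g
  have hortho : LinearMap.range f ⊔ LinearMap.range g.adjoint ⟂
      LinearMap.ker (LinearMap.hodgeLaplacian f g) :=
    hker ▸ Submodule.isOrtho_orthogonal_right _
  obtain ⟨hf, hg⟩ := Submodule.isOrtho_sup_left.mp hortho
  refine ⟨fun x hx y hy => (LinearMap.isOrtho_range_range_adjoint hgf).inner_eq hx hy,
    fun x hx z hz => hf.inner_eq hx hz, fun y hy z hz => hg.inner_eq hy hz,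
    ?_, LinearMap.ker_hodgeLaplacian f g, ?_⟩
  · change _ ⊔ LinearMap.ker (LinearMap.hodgeLaplacian f g) = ⊤
    rw [hker]
    exact Submodule.sup_orthogonal_of_hasOrthogonalProjection
  · have := LinearMap.finrank_range_add_finrank_ker_hodgeLaplacian hgf
    unfold LinearMap.hodgeLaplacian at this
    omega
end
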